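/- Let A ∈ ℂ^{N×N} be arbitrary and let S+ = max_{θ∈[0,2π)} λ₁(H(e^{iθ}A)) and S− = min_{θ∈[0,2π)} λ₁(H(e^{iθ}A)). If S− ≥ 0, then the inner numerical radius satisfies r₋(A) = S−, where r₋(A) = min{|z| : z ∈ ∂R(A)} and r₋ is computed under the convexity of R(A); in particular r₋(B) = |min_θ λ₁(H(e^{iθ}B))| whenever 0 ∈ R(B). -/

import Mathlib

open Complex Matrix
open scoped InnerProductSpace

noncomputable def numRange {N : ℕ} (B : Matrix (Fin N) (Fin N) ℂ) : Set ℂ :=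
  {z | ∃ x : EuclideanSpace ℂ (Fin N), ‖x‖ = 1 ∧ z = ⟪x, Matrix.toEuclideanLin B x⟫_ℂ}

noncomputable def numRadius {N : ℕ} (B : Matrix (Fin N) (Fin N) ℂ) : ℝ :=
  sSup {r : ℝ | ∃ x : EuclideanSpace ℂ (Fin N), ‖x‖ = 1 ∧
    r = ‖⟪x, Matrix.toEuclideanLin B x⟫_ℂ‖}

noncomputable def opNorm {N : ℕ} (B : Matrix (Fin N) (Fin N) ℂ) : ℝ :=
  ‖Matrix.toEuclideanCLM (𝕜 := ℂ) B‖

noncomputable def hermPart {N : ℕ} (D : Matrix (Fin N) (Fin N) ℂ) : Matrix (Fin N) (Fin N) ℂ :=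
  (2 : ℂ)⁻¹ • (D + Dᴴ)

theorem hermPart_isHermitian {N : ℕ} (D : Matrix (Fin N) (Fin N) ℂ) :
    (hermPart D).IsHermitian := by
  unfold hermPart Matrix.IsHermitian
  rw [Matrix.conjTranspose_smul, Matrix.conjTranspose_add, Matrix.conjTranspose_conjTranspose]
  simp [add_comm]

noncomputable def lamMax {N : ℕ} (M : Matrix (Fin N) (Fin N) ℂ) (hM : M.IsHermitian) : ℝ :=
  ⨆ i, hM.eigenvalues i

noncomputable def lamMin {N : ℕ} (M : Matrix (Fin N) (Fin N) ℂ) (hM : M.IsHermitian) : ℝ :=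
  ⨅ i, hM.eigenvalues i

/-- The inner numerical radius: the minimal modulus over the boundary of the
numerical range. -/
noncomputable def innerNumRadius {N : ℕ} (B : Matrix (Fin N) (Fin N) ℂ) : ℝ :=
  sInf {r : ℝ | ∃ z ∈ frontier (numRange B), r = ‖z‖}

/-! ### Auxiliary lemmas -/

section Aux

variable {N : ℕ}

lemma inner_hermPart (D : Matrix (Fin N) (Fin N) ℂ) (x : EuclideanSpace ℂ (Fin N)) :
    ⟪x, Matrix.toEuclideanLin (hermPart D) x⟫_ℂ
      = ((⟪x, Matrix.toEuclideanLin D x⟫_ℂ).re : ℂ) := by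
  have hadj := Matrix.toEuclideanLin_conjTranspose_eq_adjoint D
  unfold hermPart
  rw [_root_.map_smul, map_add, LinearMap.smul_apply, LinearMap.add_apply, inner_smul_right,
    inner_add_right, hadj, LinearMap.adjoint_inner_right, ← inner_conj_symm x]
  rw [add_comm, Complex.add_conj, Complex.conj_re]
  push_cast
  ring

lemma toEuclideanLin_eigenvector {M : Matrix (Fin N) (Fin N) ℂ} (hM : M.IsHermitian)
    (j : Fin N) : Matrix.toEuclideanLin M (hM.eigenvectorBasis j)
      = (hM.eigenvalues j : ℂ) • hM.eigenvectorBasis j := by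
  apply (WithLp.equiv 2 (Fin N → ℂ)).injective
  ext i
  have h := congrFun (hM.mulVec_eigenvectorBasis j) i
  simpa [Matrix.toEuclideanLin_apply, Pi.smul_apply, Complex.real_smul] using h

lemma lamMax_exists_argmax (hN : 0 < N) {M : Matrix (Fin N) (Fin N) ℂ}
    (hM : M.IsHermitian) : ∃ j, lamMax M hM = hM.eigenvalues j ∧
      ∀ i, hM.eigenvalues i ≤ hM.eigenvalues j := by
  haveI : Nonempty (Fin N) := ⟨⟨0, hN⟩⟩
  obtain ⟨j, hj⟩ := Finite.exists_max hM.eigenvalues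
  refine ⟨j, le_antisymm (ciSup_le hj) (le_ciSup (Set.Finite.bddAbove (Set.finite_range _)) j), hj⟩

lemma lamMax_attained (hN : 0 < N) {M : Matrix (Fin N) (Fin N) ℂ}
    (hM : M.IsHermitian) : ∃ x : EuclideanSpace ℂ (Fin N), ‖x‖ = 1 ∧
      ⟪x, Matrix.toEuclideanLin M x⟫_ℂ = (lamMax M hM : ℂ) := by
  obtain ⟨j, hj, -⟩ := lamMax_exists_argmax hN hM
  refine ⟨hM.eigenvectorBasis j, hM.eigenvectorBasis.orthonormal.1 j, ?_⟩
  rw [toEuclideanLin_eigenvector hM j, inner_smul_right, hj]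
  have h1 : ⟪hM.eigenvectorBasis j, hM.eigenvectorBasis j⟫_ℂ = 1 := by
    rw [inner_self_eq_norm_sq_to_K, hM.eigenvectorBasis.orthonormal.1 j]
    norm_num
  rw [h1, mul_one]

lemma re_inner_le_lamMax (hN : 0 < N) {M : Matrix (Fin N) (Fin N) ℂ}
    (hM : M.IsHermitian)
    (x : EuclideanSpace ℂ (Fin N)) (hx : ‖x‖ = 1) :
    (⟪x, Matrix.toEuclideanLin M x⟫_ℂ).re ≤ lamMax M hM := by
  haveI : Nonempty (Fin N) := ⟨⟨0, hN⟩⟩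
  set b := hM.eigenvectorBasis with hb
  set c : Fin N → ℂ := fun i => b.repr x i with hc
  have hx2 : ∑ i, Complex.normSq (c i) = 1 := by
    have h1 : ‖b.repr x‖ = 1 := by rw [LinearIsometryEquiv.norm_map, hx]
    have h2 := EuclideanSpace.norm_eq (b.repr x)
    rw [h1] at h2
    have h3 : ∑ i, ‖b.repr x i‖ ^ 2 = 1 := Real.sqrt_eq_one.mp h2.symm
    rw [← h3]
    refine Finset.sum_congr rfl fun i _ => ?_
    rw [← Complex.sq_norm]
  have hTx : Matrix.toEuclideanLin M x = ∑ i, (c i * (hM.eigenvalues i : ℂ)) • b i := by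
    conv_lhs => rw [← b.sum_repr x]
    rw [map_sum]
    refine Finset.sum_congr rfl fun i _ => ?_
    rw [_root_.map_smul, toEuclideanLin_eigenvector, smul_smul]
  have hxb : ∀ i, ⟪x, b i⟫_ℂ = (starRingEnd ℂ) (c i) := by
    intro i
    rw [← inner_conj_symm, ← b.repr_apply_apply]
  have hexp : ⟪x, Matrix.toEuclideanLin M x⟫_ℂ
      = ∑ i, (c i * (hM.eigenvalues i : ℂ)) * (starRingEnd ℂ) (c i) := by
    rw [hTx, inner_sum]
    refine Finset.sum_congr rfl fun i _ => ?_
    rw [inner_smul_right, hxb]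
  have hterm : ∀ i, ((c i * (hM.eigenvalues i : ℂ)) * (starRingEnd ℂ) (c i)).re
      = hM.eigenvalues i * Complex.normSq (c i) := by
    intro i
    have h : (c i * (hM.eigenvalues i : ℂ)) * (starRingEnd ℂ) (c i)
        = ((hM.eigenvalues i * Complex.normSq (c i) : ℝ) : ℂ) := by
      rw [Complex.ofReal_mul, ← Complex.mul_conj]; ring
    rw [h, Complex.ofReal_re]
  have hle : ∀ i, hM.eigenvalues i ≤ lamMax M hM := fun i =>
    le_ciSup (Set.Finite.bddAbove (Set.finite_range _)) i
  calc (⟪x, Matrix.toEuclideanLin M x⟫_ℂ).re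
      = ∑ i, hM.eigenvalues i * Complex.normSq (c i) := by
        rw [hexp, Complex.re_sum]
        exact Finset.sum_congr rfl fun i _ => hterm i
    _ ≤ ∑ i, lamMax M hM * Complex.normSq (c i) :=
        Finset.sum_le_sum fun i _ =>
          mul_le_mul_of_nonneg_right (hle i) (Complex.normSq_nonneg _)
    _ = lamMax M hM := by rw [← Finset.mul_sum, hx2, mul_one]

/-! ### Numerical range: compactness, nonemptiness -/

lemma numRange_eq_image (B : Matrix (Fin N) (Fin N) ℂ) :
    numRange B = (fun x : EuclideanSpace ℂ (Fin N) => ⟪x, Matrix.toEuclideanLin B x⟫_ℂ) ''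
      (Metric.sphere 0 1) := by
  ext z
  simp only [numRange, Set.mem_setOf_eq, Set.mem_image, mem_sphere_zero_iff_norm]
  exact ⟨fun ⟨x, h1, h2⟩ => ⟨x, h1, h2.symm⟩, fun ⟨x, h1, h2⟩ => ⟨x, h1, h2.symm⟩⟩

lemma continuous_quad (B : Matrix (Fin N) (Fin N) ℂ) :
    Continuous (fun x : EuclideanSpace ℂ (Fin N) => ⟪x, Matrix.toEuclideanLin B x⟫_ℂ) :=
  continuous_id.inner ((Matrix.toEuclideanLin B).continuous_of_finiteDimensional)

lemma isCompact_numRange (B : Matrix (Fin N) (Fin N) ℂ) :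
    IsCompact (numRange B) := by
  rw [numRange_eq_image]
  exact (isCompact_sphere 0 1).image (continuous_quad B)

lemma numRange_nonempty (hN : 0 < N) (B : Matrix (Fin N) (Fin N) ℂ) :
    (numRange B).Nonempty := by
  refine ⟨_, EuclideanSpace.single ⟨0, hN⟩ (1:ℂ), ?_, rfl⟩
  simp [EuclideanSpace.norm_single]

/-! ### Toeplitz–Hausdorff -/

lemma quad_expand (T : EuclideanSpace ℂ (Fin N) →ₗ[ℂ] EuclideanSpace ℂ (Fin N))
    (u v : EuclideanSpace ℂ (Fin N)) (α β : ℝ)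
    (hu : ⟪u, T u⟫_ℂ = 0) (hv : ⟪v, T v⟫_ℂ = 1) :
    ⟪(α:ℂ) • u + (β:ℂ) • v, T ((α:ℂ) • u + (β:ℂ) • v)⟫_ℂ
      = (β:ℂ)^2 + (α:ℂ)*(β:ℂ) * (⟪u, T v⟫_ℂ + ⟪v, T u⟫_ℂ) := by
  simp only [map_add, _root_.map_smul, inner_add_left, inner_add_right, inner_smul_left,
    inner_smul_right, hu, hv, Complex.conj_ofReal]
  ring

lemma th_core (T : EuclideanSpace ℂ (Fin N) →ₗ[ℂ] EuclideanSpace ℂ (Fin N))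
    (x y : EuclideanSpace ℂ (Fin N)) (hx : ‖x‖ = 1) (hy : ‖y‖ = 1)
    (hqx : ⟪x, T x⟫_ℂ = 0) (hqy : ⟪y, T y⟫_ℂ = 1) {t : ℝ} (ht : t ∈ Set.Icc (0:ℝ) 1) :
    ∃ u : EuclideanSpace ℂ (Fin N), ‖u‖ = 1 ∧ ⟪u, T u⟫_ℂ = (t : ℂ) := by
  set a := ⟪x, T y⟫_ℂ with ha
  set b := ⟪y, T x⟫_ℂ with hb
  set γ : ℝ → ℝ := fun ψ => (Complex.exp (-(ψ:ℂ) * Complex.I) * a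
    + Complex.exp ((ψ:ℂ) * Complex.I) * b).im with hγ
  have hγcont : Continuous γ := by
    apply Complex.continuous_im.comp
    fun_prop
  have hγpi : γ Real.pi = -γ 0 := by
    simp only [hγ]
    rw [Complex.ofReal_zero, neg_zero, zero_mul, Complex.exp_zero, neg_mul, Complex.exp_neg,
      Complex.exp_pi_mul_I]
    simp [neg_add]
    ring
  have hψ : ∃ ψ, γ ψ = 0 := by
    rcases le_total (γ 0) 0 with h0 | h0
    · have : (0:ℝ) ∈ Set.Icc (γ 0) (γ Real.pi) := ⟨h0, by rw [hγpi]; linarith⟩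
      obtain ⟨ψ, -, hψ⟩ := intermediate_value_Icc Real.pi_pos.le hγcont.continuousOn this
      exact ⟨ψ, hψ⟩
    · have : (0:ℝ) ∈ Set.Icc (γ Real.pi) (γ 0) := ⟨by rw [hγpi]; linarith, h0⟩
      obtain ⟨ψ, -, hψ⟩ := intermediate_value_Icc' Real.pi_pos.le hγcont.continuousOn this
      exact ⟨ψ, hψ⟩
  obtain ⟨ψ, hψ0⟩ := hψ
  set φ : ℂ := Complex.exp ((ψ:ℂ) * Complex.I) with hφ
  have hφabs : ‖φ‖ = 1 := by
    rw [hφ, Complex.norm_exp_ofReal_mul_I]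
  set x' : EuclideanSpace ℂ (Fin N) := φ • x with hx'
  have hx'norm : ‖x'‖ = 1 := by rw [hx', norm_smul, hφabs, hx, mul_one]
  have hqx' : ⟪x', T x'⟫_ℂ = 0 := by
    rw [hx', _root_.map_smul, inner_smul_left, inner_smul_right, hqx]
    ring
  have hcross : (⟪x', T y⟫_ℂ + ⟪y, T x'⟫_ℂ).im = 0 := by
    have h1 : ⟪x', T y⟫_ℂ = (starRingEnd ℂ) φ * a := by rw [hx', inner_smul_left]
    have h2 : ⟪y, T x'⟫_ℂ = φ * b := by rw [hx', _root_.map_smul, inner_smul_right]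
    have hconj : (starRingEnd ℂ) φ = Complex.exp (-(ψ:ℂ) * Complex.I) := by
      rw [hφ, ← Complex.exp_conj]
      congr 1
      simp [Complex.conj_ofReal]
    rw [h1, h2, hconj]
    exact hψ0
  set cr : ℂ := ⟪x', T y⟫_ℂ + ⟪y, T x'⟫_ℂ with hcr
  set z : ℝ → EuclideanSpace ℂ (Fin N) :=
    fun s => ((1 - s : ℝ) : ℂ) • x' + ((s : ℝ) : ℂ) • y with hz
  have hQ : ∀ s : ℝ, ⟪z s, T (z s)⟫_ℂ = ((s:ℝ):ℂ)^2 + ((1-s:ℝ):ℂ) * ((s:ℝ):ℂ) * cr :=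
    fun s => quad_expand T x' y (1-s) s hqx' hqy
  have hQim : ∀ s : ℝ, (⟪z s, T (z s)⟫_ℂ).im = 0 := by
    intro s
    rw [hQ]
    simp [Complex.add_im, Complex.mul_im, hcross, ← hcr, pow_two]
  have hzne : ∀ s ∈ Set.Icc (0:ℝ) 1, z s ≠ 0 := by
    intro s _ hzs
    have h0 : ((1 - s : ℝ) : ℂ) • x' = -(((s : ℝ) : ℂ) • y) := by
      rw [eq_neg_iff_add_eq_zero]; exact hzs
    have h1 : ⟪((1-s:ℝ):ℂ) • x', T (((1-s:ℝ):ℂ) • x')⟫_ℂ = 0 := by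
      rw [_root_.map_smul, inner_smul_left, inner_smul_right, hqx']
      ring
    rw [h0] at h1
    have h2 : ⟪((s:ℝ):ℂ) • y, T (((s:ℝ):ℂ) • y)⟫_ℂ = 0 := by
      rw [← inner_neg_neg, ← map_neg]
      exact h1
    rw [_root_.map_smul, inner_smul_left, inner_smul_right, hqy, Complex.conj_ofReal] at h2
    have hs0 : s = 0 := by
      have : ((s:ℝ):ℂ)^2 = 0 := by rw [pow_two]; simpa using h2
      exact_mod_cast pow_eq_zero_iff (n := 2) (by norm_num) |>.mp this
    rw [hs0] at hzs
    have : z 0 = x' := by simp [hz]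
    rw [this] at hzs
    rw [hzs, norm_zero] at hx'norm
    norm_num at hx'norm
  set ρ : ℝ → ℝ := fun s => (⟪z s, T (z s)⟫_ℂ).re / ‖z s‖^2 with hρ
  have hzcont : Continuous z := by
    apply Continuous.add
    · exact (Complex.continuous_ofReal.comp (by fun_prop)).smul continuous_const
    · exact Complex.continuous_ofReal.smul continuous_const
  have hQcont : Continuous fun s => ⟪z s, T (z s)⟫_ℂ :=
    hzcont.inner (T.continuous_of_finiteDimensional.comp hzcont)
  have hρcont : ContinuousOn ρ (Set.Icc 0 1) := by
    apply ContinuousOn.div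
    · exact (Complex.continuous_re.comp hQcont).continuousOn
    · exact ((hzcont.norm).pow 2).continuousOn
    · intro s hs
      exact pow_ne_zero 2 (norm_ne_zero_iff.mpr (hzne s hs))
  have hρ0 : ρ 0 = 0 := by
    have hz0 : z 0 = x' := by simp [hz]
    show (⟪z 0, T (z 0)⟫_ℂ).re / ‖z 0‖^2 = 0
    rw [hz0, hqx']
    simp
  have hρ1 : ρ 1 = 1 := by
    have hz1 : z 1 = y := by simp [hz]
    show (⟪z 1, T (z 1)⟫_ℂ).re / ‖z 1‖^2 = 1
    rw [hz1, hqy, hy]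
    simp
  have hmem : t ∈ Set.Icc (ρ 0) (ρ 1) := by rw [hρ0, hρ1]; exact ht
  obtain ⟨s, hs, hst⟩ := intermediate_value_Icc zero_le_one hρcont hmem
  set c : ℝ := ‖z s‖ with hc
  have hcne : c ≠ 0 := norm_ne_zero_iff.mpr (hzne s hs)
  refine ⟨((c⁻¹ : ℝ) : ℂ) • z s, ?_, ?_⟩
  · rw [norm_smul, Complex.norm_real, Real.norm_eq_abs, abs_inv,
      _root_.abs_of_nonneg (norm_nonneg (z s)), ← hc, inv_mul_cancel₀ hcne]
  · rw [_root_.map_smul, inner_smul_left, inner_smul_right, Complex.conj_ofReal]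
    have hQre : ⟪z s, T (z s)⟫_ℂ = (((⟪z s, T (z s)⟫_ℂ).re : ℝ) : ℂ) := by
      rw [← Complex.re_add_im ⟪z s, T (z s)⟫_ℂ, hQim s]
      simp
    rw [hQre]
    have hre : (⟪z s, T (z s)⟫_ℂ).re = t * c^2 := by
      have hd : (⟪z s, T (z s)⟫_ℂ).re / c^2 = t := hst
      rw [div_eq_iff (pow_ne_zero 2 hcne)] at hd
      exact hd
    rw [hre]
    have hcc : ((c:ℝ):ℂ) ≠ 0 := Complex.ofReal_ne_zero.mpr hcne
    push_cast
    field_simp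

lemma toEuclideanLin_one_apply (x : EuclideanSpace ℂ (Fin N)) :
    Matrix.toEuclideanLin (1 : Matrix (Fin N) (Fin N) ℂ) x = x := by
  apply (WithLp.equiv 2 (Fin N → ℂ)).injective
  ext i
  simp [Matrix.toEuclideanLin_apply, Matrix.one_mulVec]

lemma numRange_convex (A : Matrix (Fin N) (Fin N) ℂ) : Convex ℝ (numRange A) := by
  intro z₁ hz₁ z₂ hz₂ p q hp hq hpq
  by_cases hzz : z₁ = z₂
  · have : p • z₁ + q • z₂ = z₁ := by
      rw [← hzz, ← add_smul, hpq, one_smul]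
    rw [this]; exact hz₁
  · set c : ℂ := z₂ - z₁ with hcdef
    have hc : c ≠ 0 := sub_ne_zero.mpr (Ne.symm hzz)
    set B : Matrix (Fin N) (Fin N) ℂ := c⁻¹ • (A - z₁ • (1 : Matrix (Fin N) (Fin N) ℂ)) with hB
    have hq' : ∀ x : EuclideanSpace ℂ (Fin N), ‖x‖ = 1 →
        ⟪x, Matrix.toEuclideanLin B x⟫_ℂ
          = c⁻¹ * (⟪x, Matrix.toEuclideanLin A x⟫_ℂ - z₁) := by
      intro x hx
      rw [hB, _root_.map_smul, map_sub, _root_.map_smul]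
      rw [LinearMap.smul_apply, inner_smul_right, LinearMap.sub_apply, inner_sub_right,
        LinearMap.smul_apply, inner_smul_right, toEuclideanLin_one_apply,
        inner_self_eq_norm_sq_to_K, hx]
      norm_num
    obtain ⟨x, hx, hx2⟩ := hz₁
    obtain ⟨y, hy, hy2⟩ := hz₂
    have hqx : ⟪x, Matrix.toEuclideanLin B x⟫_ℂ = 0 := by
      rw [hq' x hx, ← hx2]; simp
    have hqy : ⟪y, Matrix.toEuclideanLin B y⟫_ℂ = 1 := by
      rw [hq' y hy, ← hy2, ← hcdef, inv_mul_cancel₀ hc]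
    obtain ⟨u, hu, hu2⟩ := th_core (Matrix.toEuclideanLin B) x y hx hy hqx hqy
      (t := q) ⟨hq, by linarith⟩
    refine ⟨u, hu, ?_⟩
    have := hq' u hu
    rw [hu2] at this
    have h3 : ⟪u, Matrix.toEuclideanLin A u⟫_ℂ = z₁ + q * c := by
      have h4 : c * ((q:ℂ)) = c * (c⁻¹ * (⟪u, Matrix.toEuclideanLin A u⟫_ℂ - z₁)) := by
        rw [this]
      rw [← mul_assoc, mul_inv_cancel₀ hc, one_mul] at h4
      linear_combination -h4
    rw [h3, hcdef]
    have hp' : (p:ℂ) = 1 - (q:ℂ) := by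
      have : (p:ℝ) = 1 - q := by linarith
      exact_mod_cast this
    simp only [Complex.real_smul]
    rw [hp']
    ring

/-! ### Support function -/

noncomputable def suppF (A : Matrix (Fin N) (Fin N) ℂ) (θ : ℝ) : ℝ :=
  lamMax (hermPart (Complex.exp (θ * Complex.I) • A)) (hermPart_isHermitian _)

lemma inner_hermPart_smul (A : Matrix (Fin N) (Fin N) ℂ) (θ : ℝ)
    (x : EuclideanSpace ℂ (Fin N)) :
    ⟪x, Matrix.toEuclideanLin (hermPart (Complex.exp (θ * Complex.I) • A)) x⟫_ℂ
      = (((Complex.exp (θ * Complex.I) * ⟪x, Matrix.toEuclideanLin A x⟫_ℂ).re : ℝ) : ℂ) := by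
  rw [inner_hermPart]
  congr 1
  rw [_root_.map_smul, LinearMap.smul_apply, inner_smul_right]

lemma suppF_attained (hN : 0 < N) (A : Matrix (Fin N) (Fin N) ℂ) (θ : ℝ) :
    ∃ z ∈ numRange A, suppF A θ = (Complex.exp (θ * Complex.I) * z).re := by
  obtain ⟨x, hx, hx2⟩ := lamMax_attained hN (hermPart_isHermitian (Complex.exp (θ * Complex.I) • A))
  refine ⟨⟪x, Matrix.toEuclideanLin A x⟫_ℂ, ⟨x, hx, rfl⟩, ?_⟩
  rw [inner_hermPart_smul] at hx2
  exact_mod_cast hx2.symm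

lemma suppF_bound (hN : 0 < N) (A : Matrix (Fin N) (Fin N) ℂ) (θ : ℝ) :
    ∀ z ∈ numRange A, (Complex.exp (θ * Complex.I) * z).re ≤ suppF A θ := by
  rintro z ⟨x, hx, rfl⟩
  have h := re_inner_le_lamMax hN (hermPart_isHermitian (Complex.exp (θ * Complex.I) • A)) x hx
  rw [inner_hermPart_smul, Complex.ofReal_re] at h
  exact h

lemma exists_theta (u : ℂ) (hu : ‖u‖ = 1) :
    ∃ θ ∈ Set.Ico (0:ℝ) (2 * Real.pi), Complex.exp (θ * Complex.I) = u := by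
  have harg := Complex.norm_mul_exp_arg_mul_I u
  rw [hu] at harg
  simp only [Complex.ofReal_one, one_mul] at harg
  rcases le_or_gt 0 u.arg with h0 | h0
  · exact ⟨u.arg, ⟨h0, lt_of_le_of_lt (Complex.arg_le_pi u) (by linarith [Real.pi_pos])⟩, harg⟩
  · refine ⟨u.arg + 2 * Real.pi, ⟨by linarith [Complex.neg_pi_lt_arg u, Real.pi_pos],
      by linarith⟩, ?_⟩
    rw [Complex.ofReal_add, add_mul, Complex.exp_add, harg]
    rw [Complex.ofReal_mul, Complex.ofReal_ofNat]
    rw [show ((2:ℂ) * (Real.pi:ℂ)) * Complex.I = (2 * Real.pi) * Complex.I by ring]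
    rw [Complex.exp_two_pi_mul_I]
    ring

/-- The set of support values over `[0, 2π)`. -/
def Sset (A : Matrix (Fin N) (Fin N) ℂ) : Set ℝ :=
  {r : ℝ | ∃ θ ∈ Set.Ico (0 : ℝ) (2 * Real.pi), r = suppF A θ}

lemma Sset_nonempty (A : Matrix (Fin N) (Fin N) ℂ) : (Sset A).Nonempty :=
  ⟨suppF A 0, 0, ⟨le_refl 0, by positivity⟩, rfl⟩

lemma Sset_bddBelow (hN : 0 < N) (A : Matrix (Fin N) (Fin N) ℂ) : BddBelow (Sset A) := by
  obtain ⟨z₀, hz₀⟩ := numRange_nonempty hN A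
  refine ⟨-‖z₀‖, ?_⟩
  rintro r ⟨θ, -, rfl⟩
  calc -‖z₀‖ = -‖Complex.exp (θ * Complex.I) * z₀‖ := by
        rw [norm_mul, Complex.norm_exp_ofReal_mul_I, one_mul]
    _ ≤ (Complex.exp (θ * Complex.I) * z₀).re :=
        (abs_le.1 (Complex.abs_re_le_norm _)).1
    _ ≤ suppF A θ := suppF_bound hN A θ z₀ hz₀

lemma sInf_Sset_le (hN : 0 < N) (A : Matrix (Fin N) (Fin N) ℂ) (θ : ℝ) :
    sInf (Sset A) ≤ suppF A θ := by
  have h2π : 0 < 2 * Real.pi := by positivity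
  set θ' := toIcoMod h2π 0 θ with hθ'
  have hmem : θ' ∈ Set.Ico (0:ℝ) (2 * Real.pi) := by
    have := toIcoMod_mem_Ico h2π 0 θ
    simpa using this
  obtain ⟨k, hk⟩ : ∃ k : ℤ, θ = θ' + k * (2 * Real.pi) := by
    refine ⟨toIcoDiv h2π 0 θ, ?_⟩
    have h := toIcoMod_add_toIcoDiv_zsmul h2π 0 θ
    rw [zsmul_eq_mul] at h
    linarith [h]
  have hexp : Complex.exp ((θ:ℂ) * Complex.I) = Complex.exp ((θ':ℂ) * Complex.I) := by
    rw [hk]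
    push_cast
    rw [add_mul, Complex.exp_add]
    have : ((k:ℂ) * (2 * (Real.pi:ℂ))) * Complex.I = (k:ℂ) * (2 * (Real.pi:ℂ) * Complex.I) := by
      ring
    rw [this, Complex.exp_int_mul, Complex.exp_two_pi_mul_I, _root_.one_zpow, mul_one]
  have heq : suppF A θ = suppF A θ' := by
    unfold suppF
    congr 1
    rw [hexp]
  rw [heq]
  exact csInf_le (Sset_bddBelow hN A) ⟨θ', hmem, rfl⟩

lemma sInf_Sset_nonneg (hN : 0 < N) (A : Matrix (Fin N) (Fin N) ℂ)
    (h0 : (0:ℂ) ∈ numRange A) : 0 ≤ sInf (Sset A) := by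
  apply le_csInf (Sset_nonempty A)
  rintro r ⟨θ, -, rfl⟩
  have := suppF_bound hN A θ 0 h0
  simpa using this

/-- Separation: a point outside the numerical range sees a support value
strictly below its modulus. -/
lemma sep_lemma (hN : 0 < N) (A : Matrix (Fin N) (Fin N) ℂ) {p : ℂ}
    (hp : p ∉ numRange A) :
    ∃ θ ∈ Set.Ico (0:ℝ) (2 * Real.pi), suppF A θ < ‖p‖ := by
  obtain ⟨f, u, hfu, hup⟩ := geometric_hahn_banach_closed_point (numRange_convex A)
    (isCompact_numRange A).isClosed hp
  set wc : ℂ := (f 1 : ℂ) - (f Complex.I : ℂ) * Complex.I with hwc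
  have hrep : ∀ z : ℂ, f z = (wc * z).re := by
    intro z
    have hz : z = (z.re : ℝ) • (1:ℂ) + (z.im : ℝ) • Complex.I := by
      simp only [Complex.real_smul]
      rw [mul_one, Complex.re_add_im]
    calc f z = f ((z.re : ℝ) • (1:ℂ) + (z.im : ℝ) • Complex.I) := by rw [← hz]
      _ = z.re * f 1 + z.im * f Complex.I := by
          rw [map_add, _root_.map_smul, _root_.map_smul, smul_eq_mul, smul_eq_mul]
      _ = (wc * z).re := by
          rw [hwc]
          simp [Complex.mul_re, Complex.sub_re, Complex.sub_im, Complex.mul_im]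
          ring
  obtain ⟨z₀, hz₀⟩ := numRange_nonempty hN A
  have hwc0 : wc ≠ 0 := by
    intro h0
    have h1 : f z₀ < f p := lt_trans (hfu z₀ hz₀) hup
    rw [hrep z₀, hrep p, h0] at h1
    simp at h1
  set r : ℝ := ‖wc‖ with hr
  have hr0 : 0 < r := by
    rw [hr]
    exact norm_pos_iff.mpr hwc0
  have huu : ‖wc / (r:ℂ)‖ = 1 := by
    rw [norm_div, Complex.norm_real, Real.norm_eq_abs, _root_.abs_of_pos hr0, ← hr, div_self hr0.ne']
  obtain ⟨θ, hθmem, hθ⟩ := exists_theta _ huu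
  refine ⟨θ, hθmem, ?_⟩
  obtain ⟨z₁, hz₁W, hz₁⟩ := suppF_attained hN A θ
  have hkey : ∀ z : ℂ, (Complex.exp (θ * Complex.I) * z).re = f z / r := by
    intro z
    rw [hθ, hrep z]
    rw [div_mul_eq_mul_div, Complex.div_ofReal_re]
  have h1 : suppF A θ = f z₁ / r := by rw [hz₁, hkey]
  have h2 : f z₁ / r < u / r := (div_lt_div_iff_of_pos_right hr0).mpr (hfu z₁ hz₁W)
  have h3 : u / r < f p / r := (div_lt_div_iff_of_pos_right hr0).mpr hup
  have h4 : f p / r ≤ ‖p‖ := by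
    rw [hrep p]
    calc (wc * p).re / r ≤ ‖wc * p‖ / r :=
          (div_le_div_iff_of_pos_right hr0).mpr (Complex.re_le_norm _)
      _ = ‖p‖ := by
          rw [norm_mul, ← hr, mul_comm, mul_div_assoc, div_self hr0.ne', mul_one]
  rw [h1]
  exact lt_of_lt_of_le (lt_trans h2 h3) h4

end Aux

lemma frontier_numRange_nonempty (hN : 0 < N) (A : Matrix (Fin N) (Fin N) ℂ) :
    (frontier (numRange A)).Nonempty := by
  by_contra h
  rw [Set.not_nonempty_iff_eq_empty] at h
  have hclopen : IsClopen (numRange A) := isClopen_iff_frontier_eq_empty.mpr h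
  rcases isClopen_iff.mp hclopen with h1 | h1
  · exact absurd h1 (Set.nonempty_iff_ne_empty.mp (numRange_nonempty hN A))
  · have hcpt : IsCompact (Set.univ : Set ℂ) := h1 ▸ isCompact_numRange A
    obtain ⟨R, hR⟩ := hcpt.isBounded.subset_closedBall 0
    have hin := hR (Set.mem_univ ((|R|+1 : ℝ) : ℂ))
    rw [Metric.mem_closedBall, dist_zero_right, Complex.norm_real, Real.norm_eq_abs] at hin
    have h2 : |(|R| + 1)| = |R| + 1 := _root_.abs_of_pos (by positivity)
    rw [h2] at hin
    have := le_abs_self R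
    linarith

/-- Main identity: if `0` is in the numerical range, the inner numerical radius
equals the minimum of the support function. -/
lemma innerNumRadius_eq_sInf_Sset (hN : 0 < N) (A : Matrix (Fin N) (Fin N) ℂ)
    (h0 : (0:ℂ) ∈ numRange A) : innerNumRadius A = sInf (Sset A) := by
  have hWclosed : IsClosed (numRange A) := (isCompact_numRange A).isClosed
  have hFsub : frontier (numRange A) ⊆ numRange A := hWclosed.frontier_subset
  have hFcomp : IsCompact (frontier (numRange A)) :=
    (isCompact_numRange A).of_isClosed_subset isClosed_frontier hFsub
  have hFne := frontier_numRange_nonempty hN A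
  set D : Set ℝ := {r : ℝ | ∃ z ∈ frontier (numRange A), r = ‖z‖} with hD
  have hDeq : D = (fun z : ℂ => ‖z‖) '' frontier (numRange A) := by
    ext r
    simp only [hD, Set.mem_setOf_eq, Set.mem_image]
    exact ⟨fun ⟨z, h1, h2⟩ => ⟨z, h1, h2.symm⟩, fun ⟨z, h1, h2⟩ => ⟨z, h1, h2.symm⟩⟩
  have hDcomp : IsCompact D := hDeq ▸ hFcomp.image continuous_norm
  have hDne : D.Nonempty := hDeq ▸ hFne.image _
  have hDbdd : BddBelow D := ⟨0, by rintro r ⟨z, -, rfl⟩; exact norm_nonneg z⟩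
  obtain ⟨zs, hzsF, hzsd⟩ : ∃ z ∈ frontier (numRange A), sInf D = ‖z‖ := by
    have := hDcomp.sInf_mem hDne
    rw [hDeq] at this
    obtain ⟨z, hz, hz2⟩ := this
    refine ⟨z, hz, ?_⟩
    rw [hDeq]
    exact hz2.symm
  have hdlb : ∀ z ∈ frontier (numRange A), sInf D ≤ ‖z‖ := fun z hz =>
    csInf_le hDbdd ⟨z, hz, rfl⟩
  show sInf D = sInf (Sset A)
  apply le_antisymm
  · -- d ≤ S : ray argument
    apply le_csInf (Sset_nonempty A)
    rintro r ⟨θ, hθmem, rfl⟩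
    set u : ℂ := Complex.exp (θ * Complex.I) with hu
    have huabs : ‖u‖ = 1 := Complex.norm_exp_ofReal_mul_I θ
    set g : ℝ → ℂ := fun t => (t:ℂ) * (starRingEnd ℂ) u with hg
    have hgre : ∀ t : ℝ, (u * g t).re = t := by
      intro t
      have h1 : u * g t = (t:ℂ) * ((Complex.normSq u : ℝ) : ℂ) := by
        rw [hg]
        simp only
        rw [← Complex.mul_conj]
        ring
      rw [h1, Complex.normSq_eq_norm_sq, huabs]
      norm_num
    have hgW_bound : ∀ t : ℝ, g t ∈ numRange A → t ≤ suppF A θ := by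
      intro t htW
      have := suppF_bound hN A θ _ htW
      rwa [← hu, hgre t] at this
    set Tset : Set ℝ := {t : ℝ | 0 ≤ t ∧ g t ∈ numRange A} with hTset
    have hT0 : (0:ℝ) ∈ Tset := by
      refine ⟨le_refl 0, ?_⟩
      have : g 0 = 0 := by simp [hg]
      rw [this]; exact h0
    have hTbdd : BddAbove Tset := ⟨suppF A θ, fun t ht => hgW_bound t ht.2⟩
    have hgcont : Continuous g := by fun_prop
    have hTclosed : IsClosed Tset := by
      have : Tset = {t : ℝ | 0 ≤ t} ∩ g ⁻¹' (numRange A) := rfl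
      rw [this]
      exact (isClosed_le continuous_const continuous_id).inter (hWclosed.preimage hgcont)
    set t0 := sSup Tset with ht0
    have hT0mem : t0 ∈ Tset := hTclosed.csSup_mem ⟨0, hT0⟩ hTbdd
    have hnotW : ∀ t : ℝ, t0 < t → g t ∉ numRange A := by
      intro t hlt htW
      exact absurd (le_csSup hTbdd ⟨le_trans hT0mem.1 hlt.le, htW⟩) (not_le.mpr hlt)
    have hfr : g t0 ∈ frontier (numRange A) := by
      refine ⟨subset_closure hT0mem.2, ?_⟩
      intro hint
      rw [mem_interior_iff_mem_nhds, Metric.mem_nhds_iff] at hint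
      obtain ⟨ε, hε, hball⟩ := hint
      refine hnotW (t0 + ε/2) (by linarith) (hball ?_)
      rw [Metric.mem_ball, Complex.dist_eq]
      have : g (t0 + ε/2) - g t0 = ((ε/2 : ℝ) : ℂ) * (starRingEnd ℂ) u := by
        rw [hg]; push_cast; ring
      rw [this, norm_mul, Complex.norm_real, Real.norm_eq_abs, Complex.norm_conj, huabs, mul_one]
      rw [_root_.abs_of_pos (by linarith)]
      linarith
    have h1 : sInf D ≤ ‖g t0‖ := hdlb _ hfr
    have h2 : ‖g t0‖ = t0 := by
      rw [hg]
      simp only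
      rw [norm_mul, Complex.norm_real, Real.norm_eq_abs, Complex.norm_conj, huabs, mul_one,
        _root_.abs_of_nonneg hT0mem.1]
    have h3 : t0 ≤ suppF A θ := hgW_bound t0 hT0mem.2
    rw [h2] at h1
    linarith
  · -- S ≤ d : separation argument
    by_contra hlt
    push_neg at hlt
    have hball : ∀ p : ℂ, ‖p‖ < sInf (Sset A) → p ∈ numRange A := by
      intro p hp
      by_contra hpW
      obtain ⟨θ, -, hsep⟩ := sep_lemma hN A hpW
      exact absurd (sInf_Sset_le hN A θ) (not_le.mpr (lt_trans hsep hp))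
    have hzsint : zs ∈ interior (numRange A) := by
      rw [mem_interior]
      refine ⟨Metric.ball zs (sInf (Sset A) - sInf D), ?_, Metric.isOpen_ball, ?_⟩
      · intro q hq
        rw [Metric.mem_ball, Complex.dist_eq] at hq
        apply hball
        calc ‖q‖ = ‖zs + (q - zs)‖ := by ring_nf
          _ ≤ ‖zs‖ + ‖q - zs‖ := norm_add_le _ _
          _ < sInf D + (sInf (Sset A) - sInf D) := by
              have h6 : ‖zs‖ = sInf D := hzsd.symm
              linarith
          _ = sInf (Sset A) := by ring
      · rw [Metric.mem_ball, dist_self]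
        linarith
    exact absurd hzsint hzsF.2

/-- with S₋ = min_{θ∈[0,2π)} λ₁(H(e^{iθ}A)), if S₋ ≥ 0 then
r₋(A) = S₋; in particular r₋(A) = |S₋| whenever 0 ∈ R(A). -/
theorem innerNumRadius_eq {N : ℕ} (hN : 0 < N) (A : Matrix (Fin N) (Fin N) ℂ) :
    (0 ≤ sInf {r : ℝ | ∃ θ ∈ Set.Ico (0 : ℝ) (2 * Real.pi),
          r = lamMax (hermPart (Complex.exp (θ * Complex.I) • A))
                (hermPart_isHermitian _)} →
      innerNumRadius A =
        sInf {r : ℝ | ∃ θ ∈ Set.Ico (0 : ℝ) (2 * Real.pi),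
          r = lamMax (hermPart (Complex.exp (θ * Complex.I) • A))
                (hermPart_isHermitian _)}) ∧
    ((0 : ℂ) ∈ numRange A →
      innerNumRadius A =
        |sInf {r : ℝ | ∃ θ ∈ Set.Ico (0 : ℝ) (2 * Real.pi),
          r = lamMax (hermPart (Complex.exp (θ * Complex.I) • A))
                (hermPart_isHermitian _)}|) := by
  have hset : {r : ℝ | ∃ θ ∈ Set.Ico (0 : ℝ) (2 * Real.pi),
      r = lamMax (hermPart (Complex.exp (θ * Complex.I) • A))
        (hermPart_isHermitian _)} = Sset A := rfl
  rw [hset]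
  constructor
  · intro hS
    have h0 : (0:ℂ) ∈ numRange A := by
      by_contra h0
      obtain ⟨θ, -, hsep⟩ := sep_lemma hN A h0
      rw [norm_zero] at hsep
      exact absurd (le_trans hS (sInf_Sset_le hN A θ)) (not_le.mpr hsep)
    exact innerNumRadius_eq_sInf_Sset hN A h0
  · intro h0
    rw [_root_.abs_of_nonneg (sInf_Sset_nonneg hN A h0)]
    exact innerNumRadius_eq_sInf_Sset hN A h0
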